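/- For all m ≥ 0 and n ≥ 1, sum_{j=0}^{m} (-1)^{m+j} t(m,j) G_{2n+2j} = F_n(m) (m!)^2, where t(m,j) are the central factorial numbers of the first kind and F_n are the Gandhi polynomials. -/
import Mathlib


/-- Gandhi polynomials: `F 1 = 1`, `F_{n+1}(z) = (z+1)^2 F_n(z+1) - z^2 F_n(z)`. -/
def gandhiF : ℕ → ℚ → ℚ
  | 0, _ => 1
  | 1, _ => 1
  | n + 2, z => (z + 1) ^ 2 * gandhiF (n + 1) (z + 1) - z ^ 2 * gandhiF (n + 1) z

/-- Genocchi numbers of the first kind: `genocchi n = G_{2n} = F_n(0)`. -/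
def genocchi (n : ℕ) : ℚ := gandhiF n 0

/-- Central factorial numbers of the first kind:
`t(n+1,j) = t(n,j-1) - n^2 t(n,j)`, `t(n,0) = δ_{n,0}`, `t(n,j) = 0` for `n < j`. -/
def centralt : ℕ → ℕ → ℚ
  | 0, 0 => 1
  | 0, _ + 1 => 0
  | _ + 1, 0 => 0
  | n + 1, j + 1 => centralt n j - (n : ℚ) ^ 2 * centralt n (j + 1)

lemma centralt_eq_zero : ∀ n j, n < j → centralt n j = 0
  | 0, _ + 1, _ => rfl
  | n + 1, j + 1, h => by
    have h1 : n < j := Nat.lt_of_succ_lt_succ h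
    simp [centralt, centralt_eq_zero n j h1,
      centralt_eq_zero n (j + 1) (h1.trans (Nat.lt_succ_self j))]

lemma gandhiF_rec (n : ℕ) (hn : 1 ≤ n) (z : ℚ) :
    gandhiF (n + 1) z = (z + 1) ^ 2 * gandhiF n (z + 1) - z ^ 2 * gandhiF n z := by
  obtain ⟨k, rfl⟩ := Nat.exists_eq_add_of_le hn
  rw [Nat.add_comm 1 k]
  rfl

lemma sq_mul_centralt_zero (m : ℕ) : (m : ℚ) ^ 2 * centralt m 0 = 0 := by
  cases m with
  | zero => simp
  | succ k => simp [centralt]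

theorem gandhi_values_genocchi (m n : ℕ) (hn : 1 ≤ n) :
    ∑ j ∈ Finset.range (m + 1), (-1) ^ (m + j) * centralt m j * genocchi (n + j) =
      gandhiF n (m : ℚ) * ((m.factorial : ℚ)) ^ 2 := by
  induction m generalizing n with
  | zero =>
    simp [centralt, genocchi, Nat.factorial]
  | succ m ih =>
    set c : ℕ → ℚ := fun k => (-1) ^ (m + k) * centralt m k * genocchi (n + k) with hc
    have hshift : ∑ j ∈ Finset.range (m + 1), c (j + 1) =
        ∑ j ∈ Finset.range (m + 1), c j - c 0 := by
      have h1 : ∑ j ∈ Finset.range (m + 2), c j =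
          (∑ j ∈ Finset.range (m + 1), c (j + 1)) + c 0 := Finset.sum_range_succ' c (m + 1)
      have h2 : ∑ j ∈ Finset.range (m + 2), c j =
          (∑ j ∈ Finset.range (m + 1), c j) + c (m + 1) := Finset.sum_range_succ c (m + 1)
      have h3 : c (m + 1) = 0 := by
        simp [hc, centralt_eq_zero m (m + 1) (Nat.lt_succ_self m)]
      rw [h3, add_zero] at h2
      linarith [h1.symm.trans h2]
    rw [Finset.sum_range_succ']
    have h0 : (-1 : ℚ) ^ (m + 1 + 0) * centralt (m + 1) 0 * genocchi (n + 0) = 0 := by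
      simp [centralt]
    rw [h0, add_zero]
    have hsummand : ∀ j ∈ Finset.range (m + 1),
        (-1 : ℚ) ^ (m + 1 + (j + 1)) * centralt (m + 1) (j + 1) * genocchi (n + (j + 1)) =
        ((-1) ^ (m + j) * centralt m j * genocchi (n + 1 + j)) + (m : ℚ) ^ 2 * c (j + 1) := by
      intro j _
      have hcen : centralt (m + 1) (j + 1) = centralt m j - (m : ℚ) ^ 2 * centralt m (j + 1) :=
        rfl
      have hpow : (-1 : ℚ) ^ (m + 1 + (j + 1)) = (-1 : ℚ) ^ (m + j) := by
        rw [show m + 1 + (j + 1) = m + j + 2 by ring, pow_add]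
        norm_num
      have hg : n + (j + 1) = n + 1 + j := by ring
      have hg2 : n + (j + 1) = n + (j + 1) := rfl
      rw [hcen, hpow, hc]
      simp only [hg]
      have hpow2 : (-1 : ℚ) ^ (m + (j + 1)) = -(-1 : ℚ) ^ (m + j) := by
        rw [show m + (j + 1) = m + j + 1 by ring, pow_succ]
        ring
      rw [hpow2]
      have : n + 1 + j = n + (j + 1) := by ring
      rw [this]
      ring
    rw [Finset.sum_congr rfl hsummand, Finset.sum_add_distrib, ← Finset.mul_sum, hshift]
    have hIH1 := ih (n + 1) (le_trans hn (Nat.le_succ n))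
    have hIH2 := ih n hn
    have hc0 : (m : ℚ) ^ 2 * c 0 = 0 := by
      simp only [hc]
      have := sq_mul_centralt_zero m
      cases m with
      | zero => norm_num
      | succ k => simp [centralt]
    have hconv : ∀ j ∈ Finset.range (m + 1),
        (-1 : ℚ) ^ (m + j) * centralt m j * genocchi (n + 1 + j) =
        (-1) ^ (m + j) * centralt m j * genocchi ((n + 1) + j) := fun j _ => rfl
    rw [mul_sub, hc0, sub_zero]
    have hS1 : ∑ j ∈ Finset.range (m + 1),
        (-1 : ℚ) ^ (m + j) * centralt m j * genocchi (n + 1 + j) =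
        gandhiF (n + 1) (m : ℚ) * ((m.factorial : ℚ)) ^ 2 := hIH1
    rw [hS1, hIH2]
    rw [gandhiF_rec n hn]
    have hfac : ((m + 1).factorial : ℚ) = (m + 1) * m.factorial := by
      push_cast [Nat.factorial_succ]; ring
    push_cast [hfac]
    ring
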